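/- arXiv:2208.00073 — 2 statements merged into one kernel-verified Lean document; each statement's English description precedes it below -/
import Mathlib

section
/- (Claim in the proof of Proposition 5.2, case (b).) Let n ≥ 4 and let (V₁, …, V_{2(n−1)}) be a positively convex 2(n−1)-gon in ℂ that is centrally symmetric about 0 (V_{j+n−1} = −V_j for all j, indices mod 2(n−1)) and whose vertices all lie on the unit circle (|V_j| = 1 for all j). Then 0 belongs to the level-(n−2) diagonal-gon, and moreover there exists r > 0 such that the open disk { P ∈ ℂ : |P| < r } is contained in the level-(n−2) diagonal-gon. -/
noncomputable section

/-- The (strict) total order on `ℂ`: compare imaginary parts first, then real parts. -/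
def cLt (a b : ℂ) : Prop := a.im < b.im ∨ (a.im = b.im ∧ a.re < b.re)

/-- The corresponding non-strict order on `ℂ`. -/
def cLe (a b : ℂ) : Prop := cLt a b ∨ a = b

/-- `cross u v = Im (conj u * v)`. -/
def cross (u v : ℂ) : ℝ := ((starRingEnd ℂ) u * v).im

/-- A positively convex `h`-gon: every other vertex lies strictly to the left of each
directed edge from `V (j-1)` to `V j`. -/
def PosConvex {h : ℕ} (V : ZMod h → ℂ) : Prop :=
  ∀ j i : ZMod h, i ≠ j - 1 → i ≠ j →
    0 < cross (V j - V (j - 1)) (V i - V (j - 1))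

/-- The (open) level-`s` diagonal-gon of an `h`-gon. -/
def DiagGon {h : ℕ} (V : ZMod h → ℂ) (s : ℕ) : Set ℂ :=
  {P : ℂ | ∀ j : ZMod h, 0 < cross (V (j + (s : ZMod h)) - V j) (P - V j)}

/-- Edge vectors of an `h`-gon. -/
def zEdge {h : ℕ} (V : ZMod h → ℂ) (j : ZMod h) : ℂ := V j - V (j - 1)

/-- Central symmetry about `0` for a `2(n-1)`-gon. -/
def DSym (n : ℕ) (V : ZMod (2 * (n - 1)) → ℂ) : Prop :=
  ∀ j : ZMod (2 * (n - 1)), V (j + ((n - 1 : ℕ) : ZMod (2 * (n - 1)))) = -V j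

/-- A stable `2(n-1)`-gon of type `D_n`, with punctures `B₊ = B` and `B₋ = -B`. -/
def IsStableDGon (n : ℕ) (V : ZMod (2 * (n - 1)) → ℂ) (B : ℂ) : Prop :=
  PosConvex V ∧ DSym n V ∧ cLe (-B) B ∧
    (-B) ∈ DiagGon V (n - 2) ∧ B ∈ DiagGon V (n - 2)

/-- The `2n` marked points of a type `D_n` gon: the vertices together with the two punctures. -/
def DPoints (n : ℕ) (V : ZMod (2 * (n - 1)) → ℂ) (B : ℂ) :
    ZMod (2 * (n - 1)) ⊕ Fin 2 → ℂ :=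
  Sum.elim V (fun b => if b = 0 then B else -B)

/-- `Y 0, Y 1, …, Y (2n-1)` is an increasing enumeration (via the bijection `e`) of the
`2n` marked points; `Y i` corresponds to the point `Y_{i-n}` (for `0 ≤ i ≤ n-1`) resp.
`Y_{i-n+1}` (for `n ≤ i ≤ 2n-1`) of the paper. -/
def DEnum (n : ℕ) (V : ZMod (2 * (n - 1)) → ℂ) (B : ℂ) (Y : ℕ → ℂ)
    (e : Fin (2 * n) ≃ (ZMod (2 * (n - 1)) ⊕ Fin 2)) : Prop :=
  (∀ m : Fin (2 * n), Y (m : ℕ) = DPoints n V B (e m)) ∧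
  (∀ i j : ℕ, i < j → j < 2 * n → cLe (Y i) (Y j))


/-! The origin is the midpoint of `V j` and its antipode `V (j + n - 1) = -V j`. Positive
convexity at the edge from `V (j + n - 2)` to `V (j + n - 1)` says that the triangle
`V j, V (j + n - 2), -V j` is positively oriented, so the origin, halfway between `V j` and
`-V j`, lies strictly to the left of the diagonal from `V j` to `V (j + n - 2)`. The disk then
comes from the diagonal-gon being open. -/

lemma isOpen_diagGon {h : ℕ} [NeZero h] (V : ZMod h → ℂ) (s : ℕ) :
    IsOpen (DiagGon V s) := by
  have hcross : ∀ j : ZMod h, Continuous fun P : ℂ => cross (V (j + s) - V j) (P - V j) := by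
    intro j
    unfold cross
    fun_prop
  simpa only [DiagGon, Set.ofPred_forall] using
    isOpen_iInter_of_finite fun j => isOpen_lt continuous_const (hcross j)

lemma two_mul_cross_sub_zero_sub (a b : ℂ) :
    2 * cross (b - a) (0 - a) = cross (-a - b) (a - b) := by
  simp only [cross, Complex.mul_im, Complex.sub_re, Complex.sub_im, Complex.neg_re,
    Complex.neg_im, Complex.zero_re, Complex.zero_im, Complex.conj_re, Complex.conj_im]
  ring

lemma ZMod.add_natCast_ne_self {h m : ℕ} (j : ZMod h) (hm : 0 < m) (hmh : m < h) :
    j + (m : ZMod h) ≠ j := by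
  rw [add_ne_left, Ne, ZMod.natCast_eq_zero_iff]
  exact fun hdvd => hm.ne' (Nat.eq_zero_of_dvd_of_lt hdvd hmh)

lemma PosConvex.cross_pos_of_antipodal {h : ℕ} {V : ZMod h → ℂ} (hpc : PosConvex V)
    {j : ZMod h} {s : ℕ} (hs : 0 < s) (hsh : s + 1 < h) (hanti : V (j + (s + 1 : ℕ)) = -V j) :
    0 < cross (V (j + s) - V j) (0 - V j) := by
  have hprev : j + (s + 1 : ℕ) - 1 = j + s := by push_cast; ring
  have hconv := hpc (j + (s + 1 : ℕ)) j
    (by rw [hprev]; exact (ZMod.add_natCast_ne_self j hs (by omega)).symm)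
    (ZMod.add_natCast_ne_self j (by omega) hsh).symm
  rw [hprev, hanti] at hconv
  linarith [two_mul_cross_sub_zero_sub (V j) (V (j + s))]

lemma zero_mem_diagGon_of_dSym {n : ℕ} (hn : 3 ≤ n) {V : ZMod (2 * (n - 1)) → ℂ}
    (hpc : PosConvex V) (hsym : DSym n V) : (0 : ℂ) ∈ DiagGon V (n - 2) := fun j =>
  hpc.cross_pos_of_antipodal (by omega) (by omega)
    (by rw [show n - 2 + 1 = n - 1 by omega]; exact hsym j)

theorem origin_in_diagGon_general (n : ℕ) (hn : 4 ≤ n) (V : ZMod (2 * (n - 1)) → ℂ)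
    (hpc : PosConvex V) (hsym : DSym n V) :
    (0 : ℂ) ∈ DiagGon V (n - 2) ∧
    ∃ r : ℝ, 0 < r ∧ Metric.ball (0 : ℂ) r ⊆ DiagGon V (n - 2) := by
  have : NeZero (2 * (n - 1)) := ⟨by omega⟩
  have h0 := zero_mem_diagGon_of_dSym (by omega) hpc hsym
  exact ⟨h0, Metric.isOpen_iff.mp (isOpen_diagGon V (n - 2)) 0 h0⟩

/-- (Claim in the proof of Proposition 5.2, case (b).) For a centrally symmetric
positively convex `2(n-1)`-gon inscribed in the unit circle, the origin lies in the
level-`(n-2)` diagonal-gon, and indeed some open disk around the origin is contained in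
it. -/
theorem origin_in_diagGon (n : ℕ) (hn : 4 ≤ n) (V : ZMod (2 * (n - 1)) → ℂ)
    (hpc : PosConvex V) (hsym : DSym n V) (hcirc : ∀ j, ‖V j‖ = 1) :
    (0 : ℂ) ∈ DiagGon V (n - 2) ∧
    ∃ r : ℝ, 0 < r ∧ Metric.ball (0 : ℂ) r ⊆ DiagGon V (n - 2) :=
  origin_in_diagGon_general n hn V hpc hsym
end
end

section
/- (§4.4, stability forces the four smallest points to be consecutive vertices in type E₇.) Let (V₀, …, V₁₇) be a stable 18-gon of type E7 with inner points W_j. Then there exists m ∈ ℤ/18 such that each of V_m, V_{m+1}, V_{m+2}, V_{m+3} is smaller, in the order on ℂ, than every W_k (k ∈ ℤ/18) and than every V_i with i ∉ {m, m+1, m+2, m+3}. In particular, the four smallest of the 36 points {V_j} ∪ {W_j} are four consecutive vertices of the 18-gon. -/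
noncomputable section

/-- An 18-gon of type E7. -/
def IsE7Gon (V : ZMod 18 → ℂ) : Prop :=
  (∀ j : ZMod 18, V (j + 9) = -V j) ∧
  ∀ j : ZMod 18,
    zEdge V j + zEdge V (j + 1) + zEdge V (j + 6) + zEdge V (j + 7) +
      zEdge V (j + 12) + zEdge V (j + 13) = 0

/-- The inner points `W j` of an 18-gon of type E7. -/
def WE7 (V : ZMod 18 → ℂ) (j : ZMod 18) : ℂ := V j + zEdge V (j + 5)

/-- A stable 18-gon of type E7. -/
def IsStableE7Gon (V : ZMod 18 → ℂ) : Prop :=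
  IsE7Gon V ∧ PosConvex V ∧ ∀ j : ZMod 18, WE7 V j ∈ DiagGon V 4


-- helpers
lemma cross_def (u v : ℂ) : cross u v = u.re * v.im - u.im * v.re := by
  simp [cross, Complex.mul_im]; ring

lemma cross_cyc (A B C : ℂ) : cross (B - A) (C - A) = cross (C - B) (A - B) := by
  simp [cross_def, Complex.sub_re, Complex.sub_im]; ring

lemma cast_inj18 {a b : ℕ} (ha : a < 18) (hb : b < 18) :
    ((a : ZMod 18) = (b : ZMod 18)) ↔ a = b := by
  rw [ZMod.natCast_eq_natCast_iff, Nat.ModEq]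
  constructor
  · intro h; omega
  · intro h; omega

lemma idx_ne {i : ZMod 18} {a : ℕ} (h1 : 0 < a) (h2 : a < 18) : i + (a : ZMod 18) ≠ i := by
  intro h
  have h0 : (a : ZMod 18) = ((0:ℕ) : ZMod 18) := by push_cast; linear_combination h
  have := (cast_inj18 h2 (by norm_num)).mp h0
  omega

lemma sub_one_eq (i : ZMod 18) : i - 1 = i + ((17:ℕ) : ZMod 18) := by
  have : ((17:ℕ) : ZMod 18) = -1 := by decide
  rw [this]; ring

section V
variable {V : ZMod 18 → ℂ} (hC : PosConvex V)
include hC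

lemma half {i m : ZMod 18} (h1 : m ≠ i) (h2 : m ≠ i - 1) :
    0 < cross (V i - V (i-1)) (V m - V i) := by
  have h := hC i m h2 h1
  have e : cross (V i - V (i-1)) (V m - V (i-1)) = cross (V i - V (i-1)) (V m - V i) := by
    simp [cross_def, Complex.sub_re, Complex.sub_im]; ring
  linarith [e ▸ h]

lemma halfge {i m : ZMod 18} (h1 : m ≠ i) :
    0 ≤ cross (V i - V (i-1)) (V m - V i) := by
  by_cases h2 : m = i - 1
  · subst h2
    have : cross (V i - V (i-1)) (V (i-1) - V i) = 0 := by
      simp [cross_def, Complex.sub_re, Complex.sub_im]; ring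
    linarith
  · exact (half hC h1 h2).le

lemma consec {i j : ZMod 18} (h1 : i ≠ j) (h2 : i ≠ j + 1) :
    0 < cross (V j - V i) (V (j+1) - V i) := by
  have h := hC (j+1) i (by simpa using h1) h2
  rw [cross_cyc]
  simpa using h
end V

lemma plucker_step {e u v w : ℂ} (heu : 0 < cross e u) (hev : 0 < cross e v)
    (hew : 0 ≤ cross e w) (huv : 0 < cross u v) (hvw : 0 < cross v w) :
    0 < cross u w := by
  have hid : cross e v * cross u w = cross e u * cross v w + cross e w * cross u v := by
    simp [cross_def, Complex.sub_re, Complex.sub_im]; ring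
  nlinarith [mul_pos heu hvw, mul_nonneg hew huv.le]

section V2
variable {V : ZMod 18 → ℂ} (hC : PosConvex V)
include hC

lemma tri (i : ZMod 18) (a b : ℕ) (ha : 1 ≤ a) (hab : a < b) (hb : b ≤ 17) :
    0 < cross (V (i + (a : ZMod 18)) - V i) (V (i + (b : ZMod 18)) - V i) := by
  induction b with
  | zero => omega
  | succ n ih =>
    rcases Nat.lt_or_ge a n with hlt | hge
    · -- step: n > a, use ih and plucker
      have hn17 : n ≤ 16 := by omega
      have ihn := ih hlt (by omega)
      have heu : 0 < cross (V i - V (i-1)) (V (i + (a:ZMod 18)) - V i) :=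
        half hC (idx_ne ha (by omega)) (by
          rw [sub_one_eq]
          intro h
          have := (cast_inj18 (a := a) (b := 17) (by omega) (by omega)).mp (add_left_cancel h)
          omega)
      have hev : 0 < cross (V i - V (i-1)) (V (i + (n:ZMod 18)) - V i) :=
        half hC (idx_ne (by omega) (by omega)) (by
          rw [sub_one_eq]
          intro h
          have := (cast_inj18 (a := n) (b := 17) (by omega) (by omega)).mp (add_left_cancel h)
          omega)
      have hew : 0 ≤ cross (V i - V (i-1)) (V (i + ((n+1:ℕ):ZMod 18)) - V i) :=
        halfge hC (idx_ne (by omega) (by omega))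
      have hvw : 0 < cross (V (i + (n:ZMod 18)) - V i) (V (i + ((n+1:ℕ):ZMod 18)) - V i) := by
        have h1 : i ≠ i + (n:ZMod 18) := (idx_ne (by omega) (by omega)).symm
        have h2 : i ≠ i + (n:ZMod 18) + 1 := by
          have : i + (n:ZMod 18) + 1 = i + ((n+1:ℕ):ZMod 18) := by push_cast; ring
          rw [this]
          exact (idx_ne (by omega) (by omega)).symm
        have := consec hC h1 h2
        have e : i + (n:ZMod 18) + 1 = i + ((n+1:ℕ):ZMod 18) := by push_cast; ring
        rwa [e] at this
      exact plucker_step heu hev hew ihn hvw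
    · -- base: n = a (since a < n+1 and a ≥ n)
      have hna : n = a := by omega
      subst hna
      have h1 : i ≠ i + (n:ZMod 18) := (idx_ne (by omega) (by omega)).symm
      have h2 : i ≠ i + (n:ZMod 18) + 1 := by
        have e : i + (n:ZMod 18) + 1 = i + ((n+1:ℕ):ZMod 18) := by push_cast; ring
        rw [e]; exact (idx_ne (by omega) (by omega)).symm
      have := consec hC h1 h2
      have e : i + (n:ZMod 18) + 1 = i + ((n+1:ℕ):ZMod 18) := by push_cast; ring
      rwa [e] at this
end V2

lemma nointer {p q r s : ℂ}
    (hc1 : 0 < cross (q-p) (r-p)) (hc2 : 0 < cross (r-q) (s-q))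
    (hc3 : 0 < cross (s-r) (p-r)) (hc4 : 0 < cross (p-s) (q-s))
    (hpq : p.im ≤ q.im) (hps : p.im ≤ s.im)
    (hrq : r.im ≤ q.im) (hrs : r.im ≤ s.im) : False := by
  set c1 := cross (q-p) (r-p) with hc1d
  set c2 := cross (r-q) (s-q) with hc2d
  set c3 := cross (s-r) (p-r) with hc3d
  set c4 := cross (p-s) (q-s) with hc4d
  have hK : c1 + c3 = c2 + c4 := by
    simp [hc1d, hc2d, hc3d, hc4d, cross_def, Complex.sub_re, Complex.sub_im]; ring
  have hI : c2 * p.im + c4 * r.im = c3 * q.im + c1 * s.im := by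
    simp [hc1d, hc2d, hc3d, hc4d, cross_def, Complex.sub_re, Complex.sub_im]; ring
  have hKq : c1*q.im + c3*q.im = c2*q.im + c4*q.im := by linear_combination q.im * hK
  have hKs : c1*s.im + c3*s.im = c2*s.im + c4*s.im := by linear_combination s.im * hK
  have t1 : c2 * p.im ≤ c2 * q.im := by nlinarith
  have t2 : c4 * r.im ≤ c4 * q.im := by nlinarith
  have t3 : c2 * p.im ≤ c2 * s.im := by nlinarith
  have t4 : c4 * r.im ≤ c4 * s.im := by nlinarith
  have hDB : s.im ≤ q.im := by
    have : c1 * s.im ≤ c1 * q.im := by linarith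
    exact le_of_mul_le_mul_left this hc1
  have hBD : q.im ≤ s.im := by
    have : c3 * q.im ≤ c3 * s.im := by linarith
    exact le_of_mul_le_mul_left this hc3
  have hqs : q.im = s.im := le_antisymm hBD hDB
  have hcs : c1 * s.im = c1 * q.im := by rw [hqs]
  have hAB : p.im = q.im := by
    have h1 : c2 * p.im = c2 * q.im := by linarith
    have := mul_left_cancel₀ (ne_of_gt hc2) h1
    linarith [this]
  have hCB : r.im = q.im := by
    have h1 : c4 * r.im = c4 * q.im := by linarith
    have := mul_left_cancel₀ (ne_of_gt hc4) h1
    linarith [this]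
  have : c1 = 0 := by
    rw [hc1d, cross_def]
    simp [Complex.sub_re, Complex.sub_im]
    rw [show r.im = q.im from hCB, show p.im = q.im from hAB]
    ring
  linarith

lemma imlem {d1 d2 u : ℂ} (h1 : d1.im ≤ 0) (h2 : 0 ≤ d2.im)
    (h12 : 0 < cross d1 d2) (hu1 : 0 < cross d1 u) (hu2 : 0 < cross d2 u) :
    0 < u.im := by
  have hid : cross d1 d2 * u.im = d2.im * cross d1 u - d1.im * cross d2 u := by
    simp [cross_def]; ring
  by_contra hcon
  push_neg at hcon
  have r1 : 0 ≤ d2.im * cross d1 u := mul_nonneg h2 hu1.le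
  have r2 : 0 ≤ (-d1.im) * cross d2 u := mul_nonneg (by linarith) hu2.le
  have lhs0 : cross d1 d2 * u.im ≤ 0 := mul_nonpos_of_nonneg_of_nonpos h12.le hcon
  have e2 : d2.im = 0 := by nlinarith
  have e1 : d1.im = 0 := by nlinarith
  have : cross d1 d2 = 0 := by rw [cross_def, e1, e2]; ring
  linarith

section V3
variable {V : ZMod 18 → ℂ} (hC : PosConvex V)
include hC

lemma quad (i : ZMod 18) (a1 a2 a3 : ℕ)
    (h1 : 0 < a1) (h12 : a1 < a2) (h23 : a2 < a3) (h3 : a3 ≤ 17)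
    (hpq : (V i).im ≤ (V (i+(a1:ZMod 18))).im)
    (hps : (V i).im ≤ (V (i+(a3:ZMod 18))).im)
    (hrq : (V (i+(a2:ZMod 18))).im ≤ (V (i+(a1:ZMod 18))).im)
    (hrs : (V (i+(a2:ZMod 18))).im ≤ (V (i+(a3:ZMod 18))).im) : False := by
  have hc1 := tri hC i a1 a2 h1 h12 (by omega)
  have hc4 := tri hC i a1 a3 h1 (by omega) h3
  have hc3 := tri hC i a2 a3 (by omega) h23 h3
  have e2 : i + (a1:ZMod 18) + ((a2-a1:ℕ):ZMod 18) = i + (a2:ZMod 18) := by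
    rw [Nat.cast_sub h12.le]; ring
  have e3 : i + (a1:ZMod 18) + ((a3-a1:ℕ):ZMod 18) = i + (a3:ZMod 18) := by
    rw [Nat.cast_sub (by omega : a1 ≤ a3)]; ring
  have hc2 := tri hC (i + (a1:ZMod 18)) (a2-a1) (a3-a1) (by omega) (by omega) (by omega)
  rw [e2, e3] at hc2
  rw [cross_cyc] at hc3
  rw [cross_cyc, cross_cyc] at hc4
  exact nointer hc1 hc2 hc3 hc4 hpq hps hrq hrs
end V3

/-- (§4.4.) In a stable 18-gon of type `E7`, the four smallest of the 36 points
`{V j} ∪ {W j}` are four consecutive vertices. -/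
theorem e7_four_smallest_consecutive (V : ZMod 18 → ℂ) (hV : IsStableE7Gon V) :
    ∃ m : ZMod 18, ∀ t : ZMod 18, t ∈ ({m, m + 1, m + 2, m + 3} : Set (ZMod 18)) →
      (∀ k : ZMod 18, cLt (V t) (WE7 V k)) ∧
      (∀ i : ZMod 18, i ∉ ({m, m + 1, m + 2, m + 3} : Set (ZMod 18)) →
        cLt (V t) (V i)) := by
  classical
  obtain ⟨-, hC, hSt⟩ := hV
  simp only [DiagGon, Set.mem_setOf_eq] at hSt
  -- injectivity of V
  have cross_zero : ∀ u : ℂ, cross u 0 = 0 := by intro u; simp [cross_def]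
  have hVinj : ∀ i j : ZMod 18, V i = V j → i = j := by
    intro i j h
    by_contra hne
    by_cases hj : i = j - 1
    · -- V (j-1) = V j : the edge vector vanishes
      have h2 := half hC (V := V) (i := j) (m := j + 1)
        (by intro hh; have h1 : (1 : ZMod 18) = 0 := by linear_combination hh
            revert h1; decide)
        (by intro hh; have h1 : (2 : ZMod 18) = 0 := by linear_combination hh
            revert h1; decide)
      rw [← hj, h] at h2
      simp [cross_def] at h2
    · have h2 := half hC (V := V) (i := j) (m := i) hne hj
      rw [h] at h2
      simp [cross_def] at h2
  -- the lexicographic key function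
  set f : ZMod 18 → Lex (ℝ × ℝ) := fun i => toLex ((V i).im, (V i).re) with hf
  have hflt : ∀ i j, f i < f j ↔ cLt (V i) (V j) := by
    intro i j; simp [hf, Prod.Lex.lt_iff, cLt]
  have keymin : ∀ T : Finset (ZMod 18), T.Nonempty → ∃ a ∈ T, ∀ b ∈ T, b ≠ a → cLt (V a) (V b) := by
    intro T hT
    obtain ⟨a, haT, hmin⟩ := T.exists_min_image f hT
    refine ⟨a, haT, fun b hb hba => ?_⟩
    have hle := hmin b hb
    have hne : f a ≠ f b := by
      intro h
      apply hba
      apply (hVinj b a ?_)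
      have h' := congrArg ofLex h
      simp [hf] at h'
      exact (Complex.ext h'.2 h'.1).symm
    exact (hflt a b).mp (lt_of_le_of_ne hle hne)
  -- extract the four smallest vertices
  obtain ⟨m1, -, h1⟩ := keymin Finset.univ ⟨0, Finset.mem_univ 0⟩
  have hT1 : (Finset.univ.erase m1).Nonempty := by
    apply Finset.card_pos.mp
    rw [Finset.card_erase_of_mem (Finset.mem_univ _)]
    simp
  obtain ⟨m2, hm2T, h2⟩ := keymin _ hT1
  have hT2 : ((Finset.univ.erase m1).erase m2).Nonempty := by
    apply Finset.card_pos.mp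
    rw [Finset.card_erase_of_mem hm2T, Finset.card_erase_of_mem (Finset.mem_univ _)]
    simp
  obtain ⟨m3, hm3T, h3⟩ := keymin _ hT2
  have hT3 : (((Finset.univ.erase m1).erase m2).erase m3).Nonempty := by
    apply Finset.card_pos.mp
    rw [Finset.card_erase_of_mem hm3T, Finset.card_erase_of_mem hm2T,
      Finset.card_erase_of_mem (Finset.mem_univ _)]
    simp
  obtain ⟨m4, hm4T, h4⟩ := keymin _ hT3
  have hm21 : m2 ≠ m1 := (Finset.mem_erase.mp hm2T).1
  have hm32 : m3 ≠ m2 := (Finset.mem_erase.mp hm3T).1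
  have hm31 : m3 ≠ m1 := (Finset.mem_erase.mp (Finset.mem_erase.mp hm3T).2).1
  have hm43 : m4 ≠ m3 := (Finset.mem_erase.mp hm4T).1
  have hm42 : m4 ≠ m2 := (Finset.mem_erase.mp (Finset.mem_erase.mp hm4T).2).1
  have hm41 : m4 ≠ m1 := (Finset.mem_erase.mp (Finset.mem_erase.mp (Finset.mem_erase.mp hm4T).2).2).1
  set S : Finset (ZMod 18) := {m1, m2, m3, m4} with hSdef
  have hScard : S.card = 4 := by
    rw [hSdef]
    rw [Finset.card_insert_of_notMem (by simp [hm21.symm, hm31.symm, hm41.symm]),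
      Finset.card_insert_of_notMem (by simp [hm32.symm, hm42.symm]),
      Finset.card_insert_of_notMem (by simp [hm43.symm]), Finset.card_singleton]
  have hP : ∀ s ∈ S, ∀ i, i ∉ S → cLt (V s) (V i) := by
    intro s hs i hi
    simp only [hSdef, Finset.mem_insert, Finset.mem_singleton] at hs hi
    push_neg at hi
    obtain ⟨hi1, hi2, hi3, hi4⟩ := hi
    rcases hs with rfl | rfl | rfl | rfl
    · exact h1 i (Finset.mem_univ i) hi1
    · exact h2 i (by simp [Finset.mem_erase, hi1]) hi2
    · exact h3 i (by simp [Finset.mem_erase, hi1, hi2]) hi3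
    · exact h4 i (by simp [Finset.mem_erase, hi1, hi2, hi3]) hi4
  have him : ∀ s ∈ S, ∀ i, i ∉ S → (V s).im ≤ (V i).im := by
    intro s hs i hi
    rcases hP s hs i hi with h | ⟨h, -⟩
    · exact h.le
    · exact le_of_eq h
  have hm1S : m1 ∈ S := by simp [hSdef]
  -- find m ∈ S with m - 1 ∉ S
  have hmex : ∃ m ∈ S, m - 1 ∉ S := by
    by_contra hcon
    push_neg at hcon
    have hall : ∀ n : ℕ, m1 - (n : ZMod 18) ∈ S := by
      intro n
      induction n with
      | zero => simpa using hm1S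
      | succ k ih =>
        have hh := hcon _ ih
        have e : m1 - (k : ZMod 18) - 1 = m1 - ((k+1 : ℕ) : ZMod 18) := by push_cast; ring
        rwa [e] at hh
    have huniv : ∀ j : ZMod 18, j ∈ S := by
      intro j
      have hh := hall (m1 - j).val
      rwa [show m1 - (((m1 - j).val : ℕ) : ZMod 18) = j from by
        rw [ZMod.natCast_val, ZMod.cast_id]; ring] at hh
    have hcard := Finset.card_le_card (show (Finset.univ : Finset (ZMod 18)) ⊆ S from fun x _ => huniv x)
    rw [hScard] at hcard
    simp [Finset.card_univ] at hcard
  obtain ⟨m, hmS, hm1nS⟩ := hmex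
  have hm17 : m + ((17:ℕ) : ZMod 18) ∉ S := by rwa [← sub_one_eq]
  have hmem1 : m + 1 ∈ S := by
    by_contra hq
    have hq' : m + ((1:ℕ):ZMod 18) ∉ S := by simpa using hq
    have hr : ∃ r ∈ S, r ≠ m ∧ r ≠ m + 1 ∧ r ≠ m - 1 := by
      by_contra hcon
      push_neg at hcon
      have hsub : S ⊆ {m, m + 1, m - 1} := by
        intro x hx
        simp only [Finset.mem_insert, Finset.mem_singleton]
        by_cases e1 : x = m
        · exact Or.inl e1
        by_cases e2 : x = m + 1
        · exact Or.inr (Or.inl e2)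
        exact Or.inr (Or.inr (hcon x hx e1 e2))
      have hc := Finset.card_le_card hsub
      have hc3 : ({m, m + 1, m - 1} : Finset (ZMod 18)).card ≤ 3 := by
        apply le_trans (Finset.card_insert_le _ _)
        have h2 := Finset.card_insert_le (m+1) ({m - 1} : Finset (ZMod 18))
        simp only [Finset.card_singleton] at h2
        omega
      omega
    obtain ⟨r, hrS, hrm, hrm1, hrmm1⟩ := hr
    have hc18 : (r - m).val < 18 := ZMod.val_lt _
    have hrc : r = m + (((r - m).val : ℕ) : ZMod 18) := by
      rw [ZMod.natCast_val, ZMod.cast_id]; ring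
    set c := (r - m).val with hcdef
    have hc0 : c ≠ 0 := by intro h; apply hrm; rw [hrc, h]; simp
    have hc1 : c ≠ 1 := by intro h; apply hrm1; rw [hrc, h]; norm_num
    have hc17 : c ≠ 17 := by intro h; apply hrmm1; rw [hrc, h]; exact (sub_one_eq m).symm
    exact quad hC m 1 c 17 (by omega) (by omega) (by omega) (by omega)
      (him m hmS _ hq')
      (him m hmS _ hm17)
      (by rw [← hrc]; exact him r hrS _ hq')
      (by rw [← hrc]; exact him r hrS _ hm17)
  have hmem2 : m + 2 ∈ S := by
    by_contra hq
    have hr : ∃ r ∈ S, r ≠ m ∧ r ≠ m + 1 ∧ r ≠ m + 2 ∧ r ≠ m - 1 := by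
      by_contra hcon
      push_neg at hcon
      have hsub : S ⊆ {m, m + 1} := by
        intro x hx
        simp only [Finset.mem_insert, Finset.mem_singleton]
        by_cases e1 : x = m
        · exact Or.inl e1
        by_cases e2 : x = m + 1
        · exact Or.inr e2
        by_cases e3 : x = m + 2
        · exact absurd (e3 ▸ hx) hq
        · exact absurd ((hcon x hx e1 e2 e3) ▸ hx) hm1nS
      have hc := Finset.card_le_card hsub
      have hc2 : ({m, m + 1} : Finset (ZMod 18)).card ≤ 2 := by
        apply le_trans (Finset.card_insert_le _ _); simp
      omega
    obtain ⟨r, hrS, hrm, hrm1, hrm2, hrmm1⟩ := hr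
    have hc18 : (r - m).val < 18 := ZMod.val_lt _
    have hrc : r = m + (((r - m).val : ℕ) : ZMod 18) := by
      rw [ZMod.natCast_val, ZMod.cast_id]; ring
    set c := (r - m).val with hcdef
    have hc0 : c ≠ 0 := by intro h; apply hrm; rw [hrc, h]; simp
    have hc1 : c ≠ 1 := by intro h; apply hrm1; rw [hrc, h]; norm_num
    have hc2' : c ≠ 2 := by intro h; apply hrm2; rw [hrc, h]; push_cast; ring
    have hc17 : c ≠ 17 := by intro h; apply hrmm1; rw [hrc, h]; exact (sub_one_eq m).symm
    have eq_q : m + 1 + ((1:ℕ):ZMod 18) = m + 2 := by push_cast; ring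
    have eq_r : m + 1 + (((c-1):ℕ):ZMod 18) = r := by
      rw [hrc, Nat.cast_sub (by omega : 1 ≤ c)]; push_cast; ring
    have eq_s : m + 1 + ((16:ℕ):ZMod 18) = m + ((17:ℕ):ZMod 18) := by push_cast; ring
    exact quad hC (m+1) 1 (c-1) 16 (by omega) (by omega) (by omega) (by omega)
      (by rw [eq_q]; exact him (m+1) hmem1 _ hq)
      (by rw [eq_s]; exact him (m+1) hmem1 _ hm17)
      (by rw [eq_q, eq_r]; exact him r hrS _ hq)
      (by rw [eq_s, eq_r]; exact him r hrS _ hm17)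
  have hmem3 : m + 3 ∈ S := by
    by_contra hq
    have hr : ∃ r ∈ S, r ≠ m ∧ r ≠ m + 1 ∧ r ≠ m + 2 ∧ r ≠ m + 3 ∧ r ≠ m - 1 := by
      by_contra hcon
      push_neg at hcon
      have hsub : S ⊆ {m, m + 1, m + 2} := by
        intro x hx
        simp only [Finset.mem_insert, Finset.mem_singleton]
        by_cases e1 : x = m
        · exact Or.inl e1
        by_cases e2 : x = m + 1
        · exact Or.inr (Or.inl e2)
        by_cases e3 : x = m + 2
        · exact Or.inr (Or.inr e3)
        by_cases e4 : x = m + 3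
        · exact absurd (e4 ▸ hx) hq
        · exact absurd ((hcon x hx e1 e2 e3 e4) ▸ hx) hm1nS
      have hc := Finset.card_le_card hsub
      have hc3 : ({m, m + 1, m + 2} : Finset (ZMod 18)).card ≤ 3 := by
        apply le_trans (Finset.card_insert_le _ _)
        have h2 := Finset.card_insert_le (m+1) ({m + 2} : Finset (ZMod 18))
        simp only [Finset.card_singleton] at h2
        omega
      omega
    obtain ⟨r, hrS, hrm, hrm1, hrm2, hrm3, hrmm1⟩ := hr
    have hc18 : (r - m).val < 18 := ZMod.val_lt _
    have hrc : r = m + (((r - m).val : ℕ) : ZMod 18) := by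
      rw [ZMod.natCast_val, ZMod.cast_id]; ring
    set c := (r - m).val with hcdef
    have hc0 : c ≠ 0 := by intro h; apply hrm; rw [hrc, h]; simp
    have hc1 : c ≠ 1 := by intro h; apply hrm1; rw [hrc, h]; norm_num
    have hc2' : c ≠ 2 := by intro h; apply hrm2; rw [hrc, h]; push_cast; ring
    have hc3' : c ≠ 3 := by intro h; apply hrm3; rw [hrc, h]; push_cast; ring
    have hc17 : c ≠ 17 := by intro h; apply hrmm1; rw [hrc, h]; exact (sub_one_eq m).symm
    have eq_q : m + 2 + ((1:ℕ):ZMod 18) = m + 3 := by push_cast; ring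
    have eq_r : m + 2 + (((c-2):ℕ):ZMod 18) = r := by
      rw [hrc, Nat.cast_sub (by omega : 2 ≤ c)]; push_cast; ring
    have eq_s : m + 2 + ((15:ℕ):ZMod 18) = m + ((17:ℕ):ZMod 18) := by push_cast; ring
    exact quad hC (m+2) 1 (c-2) 15 (by omega) (by omega) (by omega) (by omega)
      (by rw [eq_q]; exact him (m+2) hmem2 _ hq)
      (by rw [eq_s]; exact him (m+2) hmem2 _ hm17)
      (by rw [eq_q, eq_r]; exact him r hrS _ hq)
      (by rw [eq_s, eq_r]; exact him r hrS _ hm17)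
  -- S is exactly the block {m, m+1, m+2, m+3}
  have n01 : m ≠ m + 1 := by
    intro h; have h1 : (1:ZMod 18) = 0 := by linear_combination -h
    revert h1; decide
  have n02 : m ≠ m + 2 := by
    intro h; have h1 : (2:ZMod 18) = 0 := by linear_combination -h
    revert h1; decide
  have n03 : m ≠ m + 3 := by
    intro h; have h1 : (3:ZMod 18) = 0 := by linear_combination -h
    revert h1; decide
  have n12 : m + 1 ≠ m + 2 := by
    intro h; have h1 : (1:ZMod 18) = 0 := by linear_combination -h
    revert h1; decide
  have n13 : m + 1 ≠ m + 3 := by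
    intro h; have h1 : (2:ZMod 18) = 0 := by linear_combination -h
    revert h1; decide
  have n23 : m + 2 ≠ m + 3 := by
    intro h; have h1 : (1:ZMod 18) = 0 := by linear_combination -h
    revert h1; decide
  have hcard4 : ({m, m+1, m+2, m+3} : Finset (ZMod 18)).card = 4 := by
    rw [Finset.card_insert_of_notMem (by simp [n01, n02, n03]),
        Finset.card_insert_of_notMem (by simp [n12, n13]),
        Finset.card_insert_of_notMem (by simp [n23]), Finset.card_singleton]
  have hsubblock : ({m, m+1, m+2, m+3} : Finset (ZMod 18)) ⊆ S := by
    intro x hx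
    simp only [Finset.mem_insert, Finset.mem_singleton] at hx
    rcases hx with rfl|rfl|rfl|rfl
    exacts [hmS, hmem1, hmem2, hmem3]
  have hSeq : ({m, m+1, m+2, m+3} : Finset (ZMod 18)) = S :=
    Finset.eq_of_subset_of_card_le hsubblock (le_of_eq (hScard.trans hcard4.symm))
  have hmemiff : ∀ x : ZMod 18, x ∈ ({m, m+1, m+2, m+3} : Set (ZMod 18)) ↔ x ∈ S := by
    intro x
    rw [← hSeq]
    simp [Set.mem_insert_iff, Finset.mem_insert]
  have hnotS : ∀ cn : ℕ, 4 ≤ cn → cn ≤ 17 → m + (cn : ZMod 18) ∉ S := by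
    intro cn h4 h17 hmem
    rw [← hSeq] at hmem
    simp only [Finset.mem_insert, Finset.mem_singleton] at hmem
    rcases hmem with h|h|h|h
    · have h' : m + (cn : ZMod 18) = m + ((0:ℕ) : ZMod 18) := by push_cast; simpa using h
      have := (cast_inj18 (by omega) (by norm_num)).mp (add_left_cancel h'); omega
    · have h' : m + (cn : ZMod 18) = m + ((1:ℕ) : ZMod 18) := by push_cast; exact h
      have := (cast_inj18 (by omega) (by norm_num)).mp (add_left_cancel h'); omega
    · have h' : m + (cn : ZMod 18) = m + ((2:ℕ) : ZMod 18) := by push_cast; exact h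
      have := (cast_inj18 (by omega) (by norm_num)).mp (add_left_cancel h'); omega
    · have h' : m + (cn : ZMod 18) = m + ((3:ℕ) : ZMod 18) := by push_cast; exact h
      have := (cast_inj18 (by omega) (by norm_num)).mp (add_left_cancel h'); omega
  have hcast4 : ((4:ℕ) : ZMod 18) = 4 := by norm_num
  have hWkey : ∀ t : ZMod 18, t ∈ S → t + 4 ∉ S → t - 4 ∉ S →
      ∀ k, cLt (V t) (WE7 V k) := by
    intro t htS h4n h4n' k
    have hd2 : 0 < cross (V (t+4) - V t) (WE7 V k - V t) := by
      have hh := hSt k t; rwa [hcast4] at hh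
    have hd1 : 0 < cross (V t - V (t-4)) (WE7 V k - V t) := by
      have hh := hSt k (t-4)
      rw [hcast4, sub_add_cancel] at hh
      have e : cross (V t - V (t-4)) (WE7 V k - V (t-4))
          = cross (V t - V (t-4)) (WE7 V k - V t) := by
        simp [cross_def, Complex.sub_re, Complex.sub_im]; ring
      rwa [e] at hh
    have htri : 0 < cross (V t - V (t-4)) (V (t+4) - V t) := by
      have hh := tri hC (t-4) 4 8 (by omega) (by omega) (by omega)
      rw [hcast4, sub_add_cancel, show ((8:ℕ):ZMod 18) = 8 from by norm_num,
        show t - 4 + 8 = t + 4 from by ring] at hh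
      have e : cross (V t - V (t-4)) (V (t+4) - V (t-4))
          = cross (V t - V (t-4)) (V (t+4) - V t) := by
        simp [cross_def, Complex.sub_re, Complex.sub_im]; ring
      rwa [e] at hh
    have i1 : (V t - V (t-4)).im ≤ 0 := by
      have := him t htS (t-4) h4n'
      simp only [Complex.sub_im]; linarith
    have i2 : 0 ≤ (V (t+4) - V t).im := by
      have := him t htS (t+4) h4n
      simp only [Complex.sub_im]; linarith
    have hlt := imlem i1 i2 htri hd1 hd2
    have : (V t).im < (WE7 V k).im := by
      simp only [Complex.sub_im] at hlt; linarith
    exact Or.inl this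
  refine ⟨m, fun t ht => ?_⟩
  have htS : t ∈ S := (hmemiff t).mp ht
  have ht' : t = m ∨ t = m + 1 ∨ t = m + 2 ∨ t = m + 3 := by
    simpa [Set.mem_insert_iff] using ht
  constructor
  · have h4n : t + 4 ∉ S := by
      rcases ht' with h|rfl|rfl|rfl
      · rw [h, show m + (4:ZMod 18) = m + ((4:ℕ):ZMod 18) from by push_cast; ring]
        exact hnotS 4 (by omega) (by omega)
      · rw [show m + 1 + (4:ZMod 18) = m + ((5:ℕ):ZMod 18) from by push_cast; ring]
        exact hnotS 5 (by omega) (by omega)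
      · rw [show m + 2 + (4:ZMod 18) = m + ((6:ℕ):ZMod 18) from by push_cast; ring]
        exact hnotS 6 (by omega) (by omega)
      · rw [show m + 3 + (4:ZMod 18) = m + ((7:ℕ):ZMod 18) from by push_cast; ring]
        exact hnotS 7 (by omega) (by omega)
    have h4n' : t - 4 ∉ S := by
      rcases ht' with h|rfl|rfl|rfl
      · rw [h, show m - (4:ZMod 18) = m + ((14:ℕ):ZMod 18) from by
          rw [show ((14:ℕ):ZMod 18) = -4 from by decide]; ring]
        exact hnotS 14 (by omega) (by omega)
      · rw [show m + 1 - (4:ZMod 18) = m + ((15:ℕ):ZMod 18) from by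
          rw [show ((15:ℕ):ZMod 18) = -3 from by decide]; ring]
        exact hnotS 15 (by omega) (by omega)
      · rw [show m + 2 - (4:ZMod 18) = m + ((16:ℕ):ZMod 18) from by
          rw [show ((16:ℕ):ZMod 18) = -2 from by decide]; ring]
        exact hnotS 16 (by omega) (by omega)
      · rw [show m + 3 - (4:ZMod 18) = m + ((17:ℕ):ZMod 18) from by
          rw [show ((17:ℕ):ZMod 18) = -1 from by decide]; ring]
        exact hnotS 17 (by omega) (by omega)
    exact hWkey t htS h4n h4n'
  · intro i hi
    exact hP t htS i (fun hh => hi ((hmemiff i).mpr hh))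
end
end
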